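/- Let T > 0, δ ∈ (0,1), p ∈ (1,∞) with δ > 1/p. Let f ∈ C([0,T];ℝ) be a continuous function. Then the mixed Hölder-variation seminorm dominates the Riesz type variation and is dominated by it: ‖f‖_{V^{δ,p}} ≤ ‖f‖_{\tilde V^{δ,p}} ≤ ‖f‖_{V^{δ,p}}·C for some constant C depending only on δ and p, where the second inequality follows by combining |f|_{(1/δ)-var;[u,v]}^p ≤ ‖f‖_{V^{δ,p};[u,v]}^p |v-u|^{δp-1} with super-additivity of (u,v) ↦ ‖f‖_{V^{δ,p};[u,v]}^p. -/

import Mathlib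

/-!
Comparing with the one-step partition of each interval shows `|f b - f a| ≤ ‖f‖_{1/δ-var;[a,b]}`,
which gives the first inequality with matching partitions. Conversely, Hölder's inequality with
exponent `δp > 1` and the interval lengths as weights bounds `‖f‖_{1/δ-var;[a,b]}^p` by
`‖f‖_{V^{δ,p};[a,b]}^p |b - a|^{δp-1}`, and `(a, b) ↦ ‖f‖_{V^{δ,p};[a,b]}^p` is superadditive
because partitions of adjacent intervals concatenate; so the second inequality holds with `C = 1`.
-/

open scoped ENNReal NNReal
open MeasureTheory

/-- `u 0, u 1, ..., u n` are the points of a partition of `[s,t]`. -/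
def IsPart (s t : ℝ) (n : ℕ) (u : ℕ → ℝ) : Prop :=
  u 0 = s ∧ u n = t ∧ ∀ i < n, u i < u (i + 1)

/-- Riesz-type sum of `f` along a partition, with parameters `δ, p`. -/
noncomputable def rieszSum {E : Type*} [PseudoEMetricSpace E] (f : ℝ → E) (δ p : ℝ)
    (n : ℕ) (u : ℕ → ℝ) : ℝ≥0∞ :=
  ∑ i ∈ Finset.range n,
    edist (f (u i)) (f (u (i + 1))) ^ p / ENNReal.ofReal (u (i + 1) - u i) ^ (δ * p - 1)

/-- Riesz type variation seminorm `‖f‖_{V^{δ,p};[s,t]}`. -/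
noncomputable def VNorm {E : Type*} [PseudoEMetricSpace E] (f : ℝ → E) (δ p : ℝ)
    (s t : ℝ) : ℝ≥0∞ :=
  (⨆ n, ⨆ u, ⨆ _ : IsPart s t n u, rieszSum f δ p n u) ^ (1 / p)

/-- `q`-variation seminorm `‖f‖_{q-var;[s,t]}`. -/
noncomputable def qVar {E : Type*} [PseudoEMetricSpace E] (f : ℝ → E) (q : ℝ)
    (s t : ℝ) : ℝ≥0∞ :=
  (⨆ n, ⨆ u, ⨆ _ : IsPart s t n u,
    ∑ i ∈ Finset.range n, edist (f (u i)) (f (u (i + 1))) ^ q) ^ (1 / q)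

/-- `δ`-Hölder seminorm on `[s,t]`, i.e. `‖f‖_{V^{δ,∞};[s,t]}`. -/
noncomputable def holNorm {E : Type*} [PseudoEMetricSpace E] (f : ℝ → E) (δ : ℝ)
    (s t : ℝ) : ℝ≥0∞ :=
  ⨆ u, ⨆ v, ⨆ _ : s ≤ u ∧ u < v ∧ v ≤ t,
    edist (f u) (f v) / ENNReal.ofReal (v - u) ^ δ

/-- Nikolskii seminorm `‖f‖_{N^{δ,p};[s,t]}`. -/
noncomputable def nikNorm {E : Type*} [PseudoEMetricSpace E] (f : ℝ → E) (δ p : ℝ)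
    (s t : ℝ) : ℝ≥0∞ :=
  ⨆ h : ℝ, ⨆ _ : 0 < h ∧ h ≤ t - s,
    ENNReal.ofReal h ^ (-δ) *
      (∫⁻ r in Set.Ioc s (t - h), edist (f r) (f (r + h)) ^ p) ^ (1 / p)

/-- Refined Nikolskii seminorm `‖f‖_{\hat N^{δ,p};[s,t]}`. -/
noncomputable def nikHatNorm {E : Type*} [PseudoEMetricSpace E] (f : ℝ → E) (δ p : ℝ)
    (s t : ℝ) : ℝ≥0∞ :=
  (⨆ n, ⨆ u, ⨆ _ : IsPart s t n u,
    ∑ i ∈ Finset.range n, nikNorm f δ p (u i) (u (i + 1)) ^ p) ^ (1 / p)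

/-- Mixed Hölder-variation seminorm `‖f‖_{\tilde V^{δ,p};[s,t]}`. -/
noncomputable def tildeVNorm {E : Type*} [PseudoEMetricSpace E] (f : ℝ → E) (δ p : ℝ)
    (s t : ℝ) : ℝ≥0∞ :=
  (⨆ n, ⨆ u, ⨆ _ : IsPart s t n u,
    ∑ i ∈ Finset.range n,
      qVar f (1 / δ) (u i) (u (i + 1)) ^ p
        / ENNReal.ofReal (u (i + 1) - u i) ^ (δ * p - 1)) ^ (1 / p)

/-- Fractional Sobolev (Sobolev–Slobodeckij) seminorm `‖f‖_{W^{δ,p};[s,t]}`. -/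
noncomputable def sobNorm {E : Type*} [PseudoEMetricSpace E] (f : ℝ → E) (δ p : ℝ)
    (s t : ℝ) : ℝ≥0∞ :=
  (∫⁻ v in Set.Ioc s t, ∫⁻ u in Set.Ioc s t,
    edist (f u) (f v) ^ p / ENNReal.ofReal |v - u| ^ (1 + δ * p)) ^ (1 / p)

namespace ENNReal

/-- The weighted Hölder inequality applied to the ratios `a i / w i`. -/
theorem rpow_sum_le_rpow_sum_mul_sum_rpow_div {ι : Type*} (s : Finset ι) {r : ℝ} (hr : 1 ≤ r)
    (a w : ι → ℝ≥0∞) (hw₀ : ∀ i ∈ s, w i ≠ 0) (hw : ∀ i ∈ s, w i ≠ ∞) :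
    (∑ i ∈ s, a i) ^ r ≤ (∑ i ∈ s, w i) ^ (r - 1) * ∑ i ∈ s, a i ^ r / w i ^ (r - 1) := by
  have hr₀ : 0 < r := by linarith
  have hsplit : ∀ i ∈ s, a i = w i * (a i / w i) := fun i hi =>
    (ENNReal.mul_div_cancel (hw₀ i hi) (hw i hi)).symm
  have hpow : ∀ i ∈ s, w i * (a i / w i) ^ r = a i ^ r / w i ^ (r - 1) := fun i hi => by
    have hw_r : w i ^ (r - 1) * w i = w i ^ r := by
      simpa using (rpow_add (r - 1) 1 (hw₀ i hi) (hw i hi)).symm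
    rw [ENNReal.eq_div_iff (rpow_pos (pos_iff_ne_zero.2 (hw₀ i hi)) (hw i hi)).ne'
        (rpow_ne_top_of_nonneg (by linarith) (hw i hi)), ← mul_assoc, hw_r,
      ← mul_rpow_of_nonneg _ _ hr₀.le, ENNReal.mul_div_cancel (hw₀ i hi) (hw i hi)]
  calc (∑ i ∈ s, a i) ^ r = (∑ i ∈ s, w i * (a i / w i)) ^ r := by
        rw [Finset.sum_congr rfl hsplit]
    _ ≤ ((∑ i ∈ s, w i) ^ (1 - r⁻¹) * (∑ i ∈ s, w i * (a i / w i) ^ r) ^ r⁻¹) ^ r :=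
        rpow_le_rpow (inner_le_weight_mul_Lp_of_nonneg s hr w _) hr₀.le
    _ = (∑ i ∈ s, w i) ^ (r - 1) * ∑ i ∈ s, w i * (a i / w i) ^ r := by
        rw [mul_rpow_of_nonneg _ _ hr₀.le, ← rpow_mul, ← rpow_mul, inv_mul_cancel₀ hr₀.ne',
          rpow_one, sub_mul, one_mul, inv_mul_cancel₀ hr₀.ne']
    _ = _ := by rw [Finset.sum_congr rfl hpow]

end ENNReal

def partAppend (n₁ : ℕ) (u v : ℕ → ℝ) (j : ℕ) : ℝ :=
  if j < n₁ then u j else v (j - n₁)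

@[simp]
lemma partAppend_add (n₁ : ℕ) (u v : ℕ → ℝ) (j : ℕ) : partAppend n₁ u v (n₁ + j) = v j := by
  simp [partAppend]

lemma partAppend_of_le {n₁ j : ℕ} {u v : ℕ → ℝ} (hj : j ≤ n₁) (h : u n₁ = v 0) :
    partAppend n₁ u v j = u j := by
  rcases hj.lt_or_eq with hj | rfl
  · simp [partAppend, hj]
  · simp [partAppend, h]

namespace IsPart

variable {s m t : ℝ} {n n₁ n₂ : ℕ} {u v : ℕ → ℝ}

lemma le (h : IsPart s t n u) : s ≤ t := by
  obtain ⟨rfl, rfl, hu⟩ := h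
  have := Finset.sum_nonneg fun i (hi : i ∈ Finset.range n) =>
    sub_nonneg.2 (hu i (Finset.mem_range.1 hi)).le
  rwa [Finset.sum_range_sub, sub_nonneg] at this

lemma sum_ofReal_sub (h : IsPart s t n u) :
    ∑ i ∈ Finset.range n, ENNReal.ofReal (u (i + 1) - u i) = ENNReal.ofReal (t - s) := by
  rw [← ENNReal.ofReal_sum_of_nonneg fun i hi => sub_nonneg.2 (h.2.2 i (Finset.mem_range.1 hi)).le,
    Finset.sum_range_sub, h.1, h.2.1]

lemma exists_of_le (h : s ≤ t) : ∃ n u, IsPart s t n u := by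
  rcases h.lt_or_eq with h | rfl
  · exact ⟨1, fun i => if i = 0 then s else t, rfl, rfl, fun i hi => by
      simp [Nat.lt_one_iff.1 hi, h]⟩
  · exact ⟨0, fun _ => s, rfl, rfl, fun i hi => absurd hi (Nat.not_lt_zero i)⟩

lemma append (h₁ : IsPart s m n₁ u) (h₂ : IsPart m t n₂ v) :
    IsPart s t (n₁ + n₂) (partAppend n₁ u v) := by
  obtain ⟨hu₀, hu₁, hu⟩ := h₁
  obtain ⟨hv₀, hv₁, hv⟩ := h₂
  have hglue : u n₁ = v 0 := hu₁.trans hv₀.symm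
  refine ⟨by rw [partAppend_of_le (Nat.zero_le _) hglue, hu₀], by rw [partAppend_add, hv₁],
    fun i hi => ?_⟩
  rcases Nat.lt_or_ge i n₁ with hi₁ | hi₁
  · rw [partAppend_of_le hi₁.le hglue, partAppend_of_le hi₁ hglue]
    exact hu i hi₁
  · obtain ⟨j, rfl⟩ := Nat.exists_eq_add_of_le hi₁
    rw [partAppend_add, add_assoc, partAppend_add]
    exact hv j (by omega)

lemma restrict (h : IsPart s t (n + 1) u) : IsPart s (u n) n u :=
  ⟨h.1, rfl, fun i hi => h.2.2 i (by omega)⟩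

end IsPart

section Riesz

variable {E : Type*} [PseudoEMetricSpace E] {f : ℝ → E} {δ p s m t : ℝ}

lemma rieszSum_add (f : ℝ → E) (δ p : ℝ) (n₁ n₂ : ℕ) (u : ℕ → ℝ) :
    rieszSum f δ p (n₁ + n₂) u = rieszSum f δ p n₁ u + rieszSum f δ p n₂ (fun i => u (n₁ + i)) :=
  Finset.sum_range_add _ n₁ n₂

lemma rieszSum_congr {n : ℕ} {u v : ℕ → ℝ} (h : ∀ i ≤ n, u i = v i) :
    rieszSum f δ p n u = rieszSum f δ p n v :=
  Finset.sum_congr rfl fun i hi => by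
    rw [h i (Finset.mem_range.1 hi).le, h (i + 1) (Finset.mem_range.1 hi)]

lemma rieszSum_partAppend {n₁ n₂ : ℕ} {u v : ℕ → ℝ} (h : u n₁ = v 0) :
    rieszSum f δ p (n₁ + n₂) (partAppend n₁ u v) = rieszSum f δ p n₁ u + rieszSum f δ p n₂ v := by
  rw [rieszSum_add, rieszSum_congr fun i hi => partAppend_of_le hi h]
  simp only [partAppend_add]

noncomputable def rieszSup (f : ℝ → E) (δ p s t : ℝ) : ℝ≥0∞ :=
  ⨆ n, ⨆ u, ⨆ _ : IsPart s t n u, rieszSum f δ p n u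

lemma rieszSum_le_rieszSup {n : ℕ} {u : ℕ → ℝ} (h : IsPart s t n u) :
    rieszSum f δ p n u ≤ rieszSup f δ p s t :=
  le_iSup_of_le n <| le_iSup_of_le u <| le_iSup_of_le h le_rfl

lemma rieszSup_add_le (hsm : s ≤ m) (hmt : m ≤ t) :
    rieszSup f δ p s m + rieszSup f δ p m t ≤ rieszSup f δ p s t := by
  have hprod : ∀ a b, rieszSup f δ p a b =
      ⨆ x : ℕ × (ℕ → ℝ), ⨆ _ : IsPart a b x.1 x.2, rieszSum f δ p x.1 x.2 := fun _ _ => by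
    rw [rieszSup, iSup_prod]
  obtain ⟨n₁, u, hu⟩ := IsPart.exists_of_le hsm
  obtain ⟨n₂, v, hv⟩ := IsPart.exists_of_le hmt
  rw [hprod, hprod]
  refine ENNReal.biSup_add_biSup_le' ⟨(n₁, u), hu⟩ ⟨(n₂, v), hv⟩ fun x hx y hy => ?_
  rw [← rieszSum_partAppend (hx.2.1.trans hy.1.symm)]
  exact rieszSum_le_rieszSup (hx.append hy)

lemma IsPart.sum_rieszSup_le {n : ℕ} {u : ℕ → ℝ} (h : IsPart s t n u) :
    ∑ i ∈ Finset.range n, rieszSup f δ p (u i) (u (i + 1)) ≤ rieszSup f δ p s t := by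
  induction n generalizing t with
  | zero => simp
  | succ n ih =>
    rw [Finset.sum_range_succ, ← h.2.1]
    exact (add_le_add (ih h.restrict) le_rfl).trans
      (rieszSup_add_le h.restrict.le (h.2.2 n n.lt_succ_self).le)

end Riesz

section Variation

variable {E : Type*} [PseudoEMetricSpace E] {f : ℝ → E} {δ p q a b s t : ℝ}

lemma edist_le_qVar (hq : 0 < q) (hab : a < b) : edist (f a) (f b) ≤ qVar f q a b := by
  have hpart : IsPart a b 1 (fun i => if i = 0 then a else b) :=
    ⟨rfl, rfl, fun i hi => by simp [Nat.lt_one_iff.1 hi, hab]⟩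
  have hsum : edist (f a) (f b) ^ q ≤ ⨆ n, ⨆ u, ⨆ _ : IsPart a b n u,
      ∑ i ∈ Finset.range n, edist (f (u i)) (f (u (i + 1))) ^ q :=
    le_iSup_of_le 1 <| le_iSup_of_le _ <| le_iSup_of_le hpart <| by simp
  calc edist (f a) (f b) = (edist (f a) (f b) ^ q) ^ (1 / q) := by
        rw [← ENNReal.rpow_mul, mul_one_div_cancel hq.ne', ENNReal.rpow_one]
    _ ≤ qVar f q a b := ENNReal.rpow_le_rpow hsum (by positivity)

/-- Hölder's inequality on each partition of `[a, b]`, with the interval lengths as weights. -/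
lemma qVar_rpow_le (hp : 0 < p) (hδp : 1 ≤ δ * p) :
    qVar f (1 / δ) a b ^ p ≤ rieszSup f δ p a b * ENNReal.ofReal (b - a) ^ (δ * p - 1) := by
  have hδ : 0 < δ := pos_of_mul_pos_left (by linarith) hp.le
  have hr : 0 < δ * p := by positivity
  have hexp_mul : 1 / δ * (δ * p) = p := by field_simp
  have hpart : ∀ n u, IsPart a b n u →
      (∑ i ∈ Finset.range n, edist (f (u i)) (f (u (i + 1))) ^ (1 / δ)) ^ (δ * p)
        ≤ rieszSup f δ p a b * ENNReal.ofReal (b - a) ^ (δ * p - 1) := fun n u hu => by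
    have hexp : ∀ i, (edist (f (u i)) (f (u (i + 1))) ^ (1 / δ)) ^ (δ * p) =
        edist (f (u i)) (f (u (i + 1))) ^ p := fun i => by
      rw [← ENNReal.rpow_mul, hexp_mul]
    calc _ ≤ (∑ i ∈ Finset.range n, ENNReal.ofReal (u (i + 1) - u i)) ^ (δ * p - 1) *
          rieszSum f δ p n u := by
          simpa only [rieszSum, hexp] using ENNReal.rpow_sum_le_rpow_sum_mul_sum_rpow_div _ hδp
            (fun i => edist (f (u i)) (f (u (i + 1))) ^ (1 / δ))
            (fun i => ENNReal.ofReal (u (i + 1) - u i))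
            (fun i hi => (ENNReal.ofReal_pos.2 (sub_pos.2 (hu.2.2 i (Finset.mem_range.1 hi)))).ne')
            fun _ _ => ENNReal.ofReal_ne_top
      _ ≤ _ := by
          rw [hu.sum_ofReal_sub, mul_comm]
          exact mul_le_mul_left (rieszSum_le_rieszSup hu) _
  rw [qVar, one_div_one_div, ← ENNReal.rpow_mul, ← ENNReal.le_rpow_inv_iff hr]
  exact iSup_le fun n => iSup_le fun u => iSup_le fun hu =>
    (ENNReal.le_rpow_inv_iff hr).2 (hpart n u hu)

lemma VNorm_le_tildeVNorm (hδ : 0 < δ) (hp : 0 ≤ p) : VNorm f δ p s t ≤ tildeVNorm f δ p s t :=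
  ENNReal.rpow_le_rpow (iSup_le fun n => iSup_le fun u => iSup_le fun hu =>
    le_iSup_of_le n <| le_iSup_of_le u <| le_iSup_of_le hu <|
      Finset.sum_le_sum fun i hi => ENNReal.div_le_div_right (ENNReal.rpow_le_rpow
        (edist_le_qVar (by positivity) (hu.2.2 i (Finset.mem_range.1 hi))) hp) _)
    (by positivity)

lemma tildeVNorm_le_VNorm (hp : 0 < p) (hδp : 1 ≤ δ * p) :
    tildeVNorm f δ p s t ≤ VNorm f δ p s t :=
  ENNReal.rpow_le_rpow (iSup_le fun _ => iSup_le fun _ => iSup_le fun hu =>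
    (Finset.sum_le_sum fun _ _ => ENNReal.div_le_of_le_mul (qVar_rpow_le hp hδp)).trans
      hu.sum_rieszSup_le) (by positivity)

end Variation

theorem VNorm_le_tildeVNorm_le_general (δ p : ℝ)
    (hδ : 0 < δ) (hp : 1 < p) (hδp : 1 / p < δ) :
    ∃ C : ℝ, 0 < C ∧ ∀ (T : ℝ) (f : ℝ → ℝ), 0 < T →
      ContinuousOn f (Set.Icc 0 T) →
      VNorm f δ p 0 T ≤ tildeVNorm f δ p 0 T ∧
      tildeVNorm f δ p 0 T ≤ VNorm f δ p 0 T * ENNReal.ofReal C := by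
  have hp₀ : 0 < p := by linarith
  have hδp' : 1 ≤ δ * p := by
    rw [div_lt_iff₀ hp₀] at hδp
    exact hδp.le
  refine ⟨1, one_pos, fun T f _ _ => ⟨VNorm_le_tildeVNorm hδ hp₀.le, ?_⟩⟩
  rw [ENNReal.ofReal_one, mul_one]
  exact tildeVNorm_le_VNorm hp₀ hδp'

/-- `‖f‖_{V^{δ,p}} ≤ ‖f‖_{\tilde V^{δ,p}} ≤ C ‖f‖_{V^{δ,p}}`
for real-valued continuous paths. -/
theorem VNorm_le_tildeVNorm_le (δ p : ℝ)
    (hδ : 0 < δ) (hδ1 : δ < 1) (hp : 1 < p) (hδp : 1 / p < δ) :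
    ∃ C : ℝ, 0 < C ∧ ∀ (T : ℝ) (f : ℝ → ℝ), 0 < T →
      ContinuousOn f (Set.Icc 0 T) →
      VNorm f δ p 0 T ≤ tildeVNorm f δ p 0 T ∧
      tildeVNorm f δ p 0 T ≤ VNorm f δ p 0 T * ENNReal.ofReal C :=
  VNorm_le_tildeVNorm_le_general δ p hδ hp hδp
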